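/- arXiv:q-alg/9705014 — 3 statements merged into one kernel-verified Lean document; each statement's English description precedes it below -/
import Mathlib

section
/- Let A be a ℤ-graded algebra over ℂ with a degree-1 linear map d satisfying the q-Leibniz rule with q a primitive N-th root of unity. If d^N a = 0 and d^N b = 0 for homogeneous a, b, then d^N(ab) = 0. -/
/-- q-binomial-like coefficients with an extra twist factor `Q`. -/
noncomputable def stmt2cc (q Q : ℂ) : ℕ → ℕ → ℂ
  | 0, 0 => 1
  | 0, _+1 => 0
  | n+1, 0 => stmt2cc q Q n 0
  | n+1, k+1 => stmt2cc q Q n (k+1) + Q * q ^ (n - k) * stmt2cc q Q n k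

lemma stmt2cc_zero_succ (q Q : ℂ) (k : ℕ) : stmt2cc q Q 0 (k+1) = 0 := rfl

lemma stmt2cc_succ_zero (q Q : ℂ) (n : ℕ) : stmt2cc q Q (n+1) 0 = stmt2cc q Q n 0 := rfl

lemma stmt2cc_succ_succ (q Q : ℂ) (n k : ℕ) :
    stmt2cc q Q (n+1) (k+1) = stmt2cc q Q n (k+1) + Q * q ^ (n - k) * stmt2cc q Q n k := rfl

lemma stmt2cc_zero (q Q : ℂ) (n : ℕ) : stmt2cc q Q n 0 = 1 := by
  induction n with
  | zero => rfl
  | succ n ih => rw [stmt2cc_succ_zero, ih]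

lemma stmt2cc_gt (q Q : ℂ) : ∀ n k : ℕ, n < k → stmt2cc q Q n k = 0 := by
  intro n
  induction n with
  | zero => intro k hk; match k, hk with
    | k+1, _ => rfl
  | succ n ih =>
    intro k hk
    match k, hk with
    | k+1, hk =>
      rw [stmt2cc_succ_succ, ih (k+1) (by omega), ih k (by omega)]
      ring

lemma stmt2cc_key (q Q : ℂ) : ∀ n k : ℕ,
    (1 - q ^ (k+1)) * stmt2cc q Q (n+1) (k+1) = Q * (1 - q ^ (n+1)) * stmt2cc q Q n k := by
  intro n
  induction n with
  | zero =>
    intro k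
    match k with
    | 0 =>
      rw [stmt2cc_succ_succ, stmt2cc_zero_succ, stmt2cc_zero]
      norm_num
      ring
    | k+1 =>
      rw [stmt2cc_succ_succ, stmt2cc_zero_succ, stmt2cc_zero_succ]
      ring
  | succ n ih =>
    intro k
    match k with
    | 0 =>
      rw [stmt2cc_succ_succ, stmt2cc_zero]
      have h2 := ih 0
      rw [stmt2cc_zero] at h2
      simp only [Nat.sub_zero]
      linear_combination h2
    | k'+1 =>
      rcases le_or_gt k' n with hkn | hkn
      · have h1 := ih (k'+1)
        have h2 := ih k'
        have hrec := stmt2cc_succ_succ q Q n k'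
        have hq : q ^ (n - k') * q ^ (k'+1) = q ^ (n+1) := by
          rw [← pow_add]; congr 1; omega
        have hsub : n+1-(k'+1) = n - k' := by omega
        rw [stmt2cc_succ_succ q Q (n+1) (k'+1), hsub]
        linear_combination h1 + Q * q ^ (n-k') * h2 - Q * (1 - q^(n+1)) * hrec
          + Q * (stmt2cc q Q (n+1) (k'+1)) * (1 - q) * hq
      · rw [stmt2cc_gt q Q (n+1+1) (k'+1+1) (by omega),
          stmt2cc_gt q Q (n+1) (k'+1) (by omega)]
        ring

theorem stmt_2 (A : Type*) [Ring A] [Algebra ℂ A]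
    (H : A → ℤ → Prop) (q : ℂ) (N : ℕ) (hN : 2 ≤ N)
    (hqN : q ^ N = 1) (hprim : ∀ k, 0 < k → k < N → q ^ k ≠ 1)
    (d : A →ₗ[ℂ] A)
    (hdH : ∀ a i, H a i → H (d a) (i + 1))
    (hmulH : ∀ a b i j, H a i → H b j → H (a * b) (i + j))
    (hLeib : ∀ (a b : A) (i : ℤ), H a i → d (a * b) = d a * b + q ^ i • (a * d b))
    (a b : A) (i j : ℤ) (ha : H a i) (hb : H b j)
    (hda : (⇑d)^[N] a = 0) (hdb : (⇑d)^[N] b = 0) :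
    (⇑d)^[N] (a * b) = 0 := by
  have hq0 : q ≠ 0 := by
    intro h
    rw [h, zero_pow (by omega : N ≠ 0)] at hqN
    exact zero_ne_one hqN
  set Q : ℂ := q ^ i with hQ
  have hHa : ∀ m : ℕ, H ((⇑d)^[m] a) (i + m) := by
    intro m
    induction m with
    | zero => simpa using ha
    | succ m ih =>
      rw [Function.iterate_succ_apply']
      have := hdH _ _ ih
      have he : (i + (m:ℤ)) + 1 = i + ((m:ℕ)+1 : ℕ) := by push_cast; ring
      rwa [he] at this
  have key : ∀ n : ℕ, (⇑d)^[n] (a * b)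
      = ∑ k ∈ Finset.range (n+1),
          stmt2cc q Q n k • ((⇑d)^[n-k] a * (⇑d)^[k] b) := by
    intro n
    induction n with
    | zero => simp [stmt2cc]
    | succ n ih =>
      rw [Function.iterate_succ_apply', ih, map_sum]
      have step : ∀ k ∈ Finset.range (n+1),
          d (stmt2cc q Q n k • ((⇑d)^[n-k] a * (⇑d)^[k] b))
          = stmt2cc q Q n k • ((⇑d)^[(n-k)+1] a * (⇑d)^[k] b)
            + (Q * q ^ (n-k) * stmt2cc q Q n k) • ((⇑d)^[n-k] a * (⇑d)^[k+1] b) := by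
        intro k hk
        rw [map_smul, hLeib _ _ _ (hHa (n-k))]
        have hw : q ^ (i + ((n-k : ℕ) : ℤ)) = Q * q ^ (n-k) := by
          rw [zpow_add₀ hq0, zpow_natCast]
        rw [hw, Function.iterate_succ_apply' d (n-k), Function.iterate_succ_apply' d k,
          smul_add, smul_smul, mul_comm (stmt2cc q Q n k) (Q * q ^ (n-k))]
      rw [Finset.sum_congr rfl step, Finset.sum_add_distrib]
      rw [Finset.sum_range_succ'
        (fun k => stmt2cc q Q (n+1) k • ((⇑d)^[n+1-k] a * (⇑d)^[k] b)) (n+1)]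
      have hsplit : ∀ k ∈ Finset.range (n+1),
          stmt2cc q Q (n+1) (k+1) • ((⇑d)^[n+1-(k+1)] a * (⇑d)^[k+1] b)
          = stmt2cc q Q n (k+1) • ((⇑d)^[n-k] a * (⇑d)^[k+1] b)
            + (Q * q ^ (n-k) * stmt2cc q Q n k) • ((⇑d)^[n-k] a * (⇑d)^[k+1] b) := by
        intro k hk
        have hs : n+1-(k+1) = n-k := by omega
        rw [hs, stmt2cc_succ_succ, add_smul]
      rw [Finset.sum_congr rfl hsplit, Finset.sum_add_distrib]
      have h0 : stmt2cc q Q (n+1) 0 • ((⇑d)^[n+1-0] a * (⇑d)^[0] b)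
          = stmt2cc q Q n 0 • ((⇑d)^[n+1] a * b) := by
        rw [stmt2cc_zero, stmt2cc_zero]
        norm_num
      rw [h0]
      have hS1 : ∑ k ∈ Finset.range (n+1),
            stmt2cc q Q n k • ((⇑d)^[(n-k)+1] a * (⇑d)^[k] b)
          = (∑ k ∈ Finset.range (n+1),
              stmt2cc q Q n (k+1) • ((⇑d)^[n-k] a * (⇑d)^[k+1] b))
            + stmt2cc q Q n 0 • ((⇑d)^[n+1] a * b) := by
        rw [Finset.sum_range_succ'
          (fun k => stmt2cc q Q n k • ((⇑d)^[(n-k)+1] a * (⇑d)^[k] b)) n]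
        congr 1
        · rw [Finset.sum_range_succ, stmt2cc_gt q Q n (n+1) (by omega), zero_smul, add_zero]
          refine Finset.sum_congr rfl (fun k hk => ?_)
          have hk' : k < n := Finset.mem_range.mp hk
          have hs : (n-(k+1))+1 = n-k := by omega
          rw [hs]
      rw [hS1]
      abel
  have hvan : ∀ k : ℕ, 0 < k → k < N → stmt2cc q Q N k = 0 := by
    intro k hk1 hk2
    match k, hk1 with
    | k'+1, _ =>
      obtain ⟨M, hM⟩ : ∃ M, N = M + 1 := ⟨N - 1, by omega⟩
      have h := stmt2cc_key q Q M k'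
      rw [← hM, hqN, sub_self, mul_zero, zero_mul] at h
      have hne : (1 : ℂ) - q ^ (k'+1) ≠ 0 := by
        intro hcon
        exact hprim (k'+1) (by omega) hk2 (by linear_combination -hcon)
      exact (mul_eq_zero.mp h).resolve_left hne
  rw [key N]
  refine Finset.sum_eq_zero (fun k hk => ?_)
  have hkN : k ≤ N := by
    have := Finset.mem_range.mp hk; omega
  rcases Nat.eq_zero_or_pos k with h0 | hpos
  · subst h0
    rw [Nat.sub_zero, hda, zero_mul, smul_zero]
  · rcases eq_or_lt_of_le hkN with hEq | hlt
    · subst hEq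
      rw [hdb, mul_zero, smul_zero]
    · rw [hvan k hpos hlt, zero_smul]
end

section
/- In the free noncommutative algebra over ℂ generated by symbols x, dx, d²x subject to the relations f·dx = dx·f and f·d²x = d²x·f + (j−1)(dx)² f' (for f a polynomial in x, f' its derivative), applying the j-Leibniz rule d³ ≡ 0 consistency forces the relations (dx)³ = 0 and dx·d²x = j·d²x·dx, where j is a primitive cube root of unity. -/
open Polynomial

/-!
Applying `d` to `x·d²x = d²x·x + (j - 1)(dx)²`, the graded Leibniz rule and `d³ = 0` give a linear
relation between `dx·d²x` and `d²x·dx` which, since `j² + j + 1 = 0`, says `dx·d²x = j·d²x·dx`.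
Multiplying the same relation on the left by `dx` and commuting `x` past `dx·d²x` in two ways then
gives `(j - 1)²(dx)³ = 0`.
-/

theorem sq_add_self_add_one_eq_zero_of_pow_three_eq_one {K : Type*} [Field K] {j : K}
    (hj3 : j ^ 3 = 1) (hj1 : j ≠ 1) : j ^ 2 + j + 1 = 0 := by
  have h : (j - 1) * (j ^ 2 + j + 1) = 0 := by linear_combination hj3
  exact (mul_eq_zero.mp h).resolve_left (sub_ne_zero.mpr hj1)

/-- `H ω i` says that `ω` is homogeneous of degree `i`. -/
def IsGradedDerivation {K Ω : Type*} [Field K] [Ring Ω] [Algebra K Ω]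
    (j : K) (H : Ω → ℤ → Prop) (d : Ω →ₗ[K] Ω) : Prop :=
  ∀ (ω η : Ω) (i : ℤ), H ω i → d (ω * η) = d ω * η + j ^ i • (ω * d η)

section

variable {K : Type*} [Field K] {j : K}

theorem eq_smul_of_eq_sq_smul_add_smul [CharZero K] {M : Type*} [AddCommGroup M] [Module K M]
    (hj : j ^ 2 + j + 1 = 0) {u v : M} (h : u = j ^ 2 • v + (j - 1) • (v + j • u)) :
    u = j • v := by
  have hz : ∀ m : M, (j ^ 2 + j + 1) • m = 0 := fun m => by rw [hj, zero_smul]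
  linear_combination (norm := module) (-(j / 2)) • h + (1 - j / 2) • hz u - (j / 2) • hz v

variable {Ω : Type*} [Ring Ω] [Algebra K Ω]

theorem IsGradedDerivation.d_mul_dd_eq_smul [CharZero K] {H : Ω → ℤ → Prop} {d : Ω →ₗ[K] Ω}
    (hd : IsGradedDerivation j H d) (hj : j ^ 2 + j + 1 = 0)
    (hdH : ∀ ω i, H ω i → H (d ω) (i + 1)) (hd3 : ∀ ω : Ω, d (d (d ω)) = 0)
    {x : Ω} (hx : H x 0) (hrel : x * d (d x) = d (d x) * x + (j - 1) • (d x * d x)) :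
    d x * d (d x) = j • (d (d x) * d x) := by
  have hdx : H (d x) 1 := by simpa using hdH x 0 hx
  have hddx : H (d (d x)) 2 := by simpa using hdH (d x) 1 hdx
  have h := congrArg d hrel
  rw [map_add, map_smul, hd x _ 0 hx, hd _ x 2 hddx, hd (d x) (d x) 1 hdx, hd3] at h
  simp only [mul_zero, zero_mul, zero_add, add_zero, zpow_zero, zpow_one, one_smul] at h
  exact eq_smul_of_eq_sq_smul_add_smul hj (by exact_mod_cast h)

theorem mul_self_mul_self_eq_zero_of_commute {a b x : Ω} (hj1 : j ≠ 1) (hxa : x * a = a * x)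
    (hxb : x * b = b * x + (j - 1) • (a * a)) (hab : a * b = j • (b * a)) :
    a * a * a = 0 := by
  have key : (j - 1) • (a * a * a) = (j * (j - 1)) • (a * a * a) :=
    calc (j - 1) • (a * a * a)
        = a * (x * b) - a * b * x := by rw [hxb]; noncomm_ring
      _ = x * (a * b) - a * b * x := by rw [← mul_assoc, ← hxa, mul_assoc]
      _ = j • (x * b * a - b * a * x) := by
          simp only [hab, mul_smul_comm, smul_mul_assoc, smul_sub, mul_assoc]
      _ = j • (b * (x * a) - b * a * x + (j - 1) • (a * a * a)) := by rw [hxb]; noncomm_ring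
      _ = (j * (j - 1)) • (a * a * a) := by rw [hxa, mul_smul]; noncomm_ring
  have h : ((j - 1) * (j - 1)) • (a * a * a) = 0 := by
    linear_combination (norm := module) -key
  have hj1' : j - 1 ≠ 0 := sub_ne_zero.mpr hj1
  exact (smul_eq_zero.mp h).resolve_left (mul_ne_zero hj1' hj1')

end

theorem stmt_11_general (j : ℂ) (hj3 : j ^ 3 = 1) (hj1 : j ≠ 1)
    (Ω : Type*) [Ring Ω] [Algebra ℂ Ω]
    (H : Ω → ℤ → Prop)
    (d : Ω →ₗ[ℂ] Ω)
    (hdH : ∀ ω i, H ω i → H (d ω) (i + 1))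
    (hLeib : ∀ (ω η : Ω) (i : ℤ), H ω i → d (ω * η) = d ω * η + j ^ i • (ω * d η))
    (hd3 : ∀ ω : Ω, d (d (d ω)) = 0)
    (x : Ω) (hx : H x 0)
    (hrel1 : ∀ f : Polynomial ℂ,
      Polynomial.aeval x f * d x = d x * Polynomial.aeval x f)
    (hrel2 : ∀ f : Polynomial ℂ,
      Polynomial.aeval x f * d (d x) =
        d (d x) * Polynomial.aeval x f +
          (j - 1) • (d x * d x * Polynomial.aeval x (Polynomial.derivative f))) :
    d x * d x * d x = 0 ∧ d x * d (d x) = j • (d (d x) * d x) := by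
  have hj := sq_add_self_add_one_eq_zero_of_pow_three_eq_one hj3 hj1
  have hxa : x * d x = d x * x := by simpa using hrel1 X
  have hxb : x * d (d x) = d (d x) * x + (j - 1) • (d x * d x) := by simpa using hrel2 X
  have hab : d x * d (d x) = j • (d (d x) * d x) :=
    IsGradedDerivation.d_mul_dd_eq_smul hLeib hj hdH hd3 hx hxb
  exact ⟨mul_self_mul_self_eq_zero_of_commute hj1 hxa hxb hab, hab⟩

theorem stmt_11 (j : ℂ) (hj3 : j ^ 3 = 1) (hj1 : j ≠ 1)
    (Ω : Type*) [Ring Ω] [Algebra ℂ Ω]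
    (H : Ω → ℤ → Prop)
    (d : Ω →ₗ[ℂ] Ω)
    (hdH : ∀ ω i, H ω i → H (d ω) (i + 1))
    (hmulH : ∀ ω η i k, H ω i → H η k → H (ω * η) (i + k))
    (hLeib : ∀ (ω η : Ω) (i : ℤ), H ω i → d (ω * η) = d ω * η + j ^ i • (ω * d η))
    (hd3 : ∀ ω : Ω, d (d (d ω)) = 0)
    (x : Ω) (hx : H x 0)
    (hd0 : ∀ f : Polynomial ℂ,
      d (Polynomial.aeval x f) = d x * Polynomial.aeval x (Polynomial.derivative f))
    (hrel1 : ∀ f : Polynomial ℂ,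
      Polynomial.aeval x f * d x = d x * Polynomial.aeval x f)
    (hrel2 : ∀ f : Polynomial ℂ,
      Polynomial.aeval x f * d (d x) =
        d (d x) * Polynomial.aeval x f +
          (j - 1) • (d x * d x * Polynomial.aeval x (Polynomial.derivative f))) :
    d x * d x * d x = 0 ∧ d x * d (d x) = j • (d (d x) * d x) :=
  stmt_11_general j hj3 hj1 Ω H d hdH hLeib hd3 x hx hrel1 hrel2
end

section
/- Let j be a primitive cube root of unity. In any j-differential calculus on the plane with df = dx f_x + dy f_y, where x dy = dy x and y dx = dx y, applying d yields dx dy − j dy dx = d²y·x − x·d²y and dy dx − j dx dy = d²x·y − y·d²x; if moreover both x commutes with d²y and y commutes with d²x, then dx dy = j dy dx and dy dx = j dx dy, which forces (1 − j²) dx dy = 0, and since j² ≠ 1, dx dy = 0 and dy dx = 0. -/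
/-! Apply `d` to both sides of `x · dy = dy · x`: the `j`-Leibniz rule gives `dx dy + x d²y` on the
left (`x` has degree `0`) and `d²y x + j dy dx` on the right (`dy` has degree `1`), which is the first
identity; the second is symmetric. If `x` commutes with `d²y` and `y` with `d²x`, then
`dx dy = j dy dx` and `dy dx = j dx dy`, so `(1 - j²) dx dy = 0`, and `j² ≠ 1` for a primitive cube
root of unity. -/

theorem leibniz_sub_eq_of_mul_comm {K A : Type*} [Field K] [Ring A] [Algebra K A] (j : K)
    (H : A → ℤ → Prop) (d : A →ₗ[K] A)
    (hLeib : ∀ (ω η : A) (i : ℤ), H ω i → d (ω * η) = d ω * η + j ^ i • (ω * d η))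
    {a b : A} (ha : H a 0) (hb : H b 1) (hab : a * b = b * a) :
    d a * b - j • (b * d a) = d b * a - a * d b := by
  have hab' : d a * b + a * d b = d b * a + j • (b * d a) := by
    have hba := hLeib b a 1 hb
    rw [← hab, hLeib a b 0 ha] at hba
    simpa using hba
  exact sub_eq_sub_iff_add_eq_add.mpr hab'

theorem eq_zero_of_eq_smul_of_eq_smul {K M : Type*} [Field K] [AddCommGroup M] [Module K M]
    {j : K} (hj : j ^ 2 ≠ 1) {u v : M} (hu : u = j • v) (hv : v = j • u) : u = 0 ∧ v = 0 := by
  have hu0 : u = 0 := by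
    have : (j ^ 2 - 1) • u = 0 := by
      rw [sub_smul, one_smul, sq, mul_smul, ← hv, ← hu, sub_self]
    exact (smul_eq_zero.mp this).resolve_left (sub_ne_zero.mpr hj)
  exact ⟨hu0, by rw [hv, hu0, smul_zero]⟩

theorem stmt_13_general (j : ℂ) (hj3 : j ^ 3 = 1) (hj1 : j ≠ 1)
    (Ω : Type*) [Ring Ω] [Algebra ℂ Ω]
    (H : Ω → ℤ → Prop)
    (d : Ω →ₗ[ℂ] Ω)
    (hdH : ∀ ω i, H ω i → H (d ω) (i + 1))
    (hLeib : ∀ (ω η : Ω) (i : ℤ), H ω i → d (ω * η) = d ω * η + j ^ i • (ω * d η))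
    (x y : Ω) (hx : H x 0) (hy : H y 0)
    (hxy : x * d y = d y * x) (hyx : y * d x = d x * y) :
    (d x * d y - j • (d y * d x) = d (d y) * x - x * d (d y)) ∧
    (d y * d x - j • (d x * d y) = d (d x) * y - y * d (d x)) ∧
    ((x * d (d y) = d (d y) * x ∧ y * d (d x) = d (d x) * y) →
      d x * d y = 0 ∧ d y * d x = 0) := by
  have hj : IsPrimitiveRoot j 3 := orderOf_eq_prime hj3 hj1 ▸ IsPrimitiveRoot.orderOf j
  have hdx : H (d x) 1 := by simpa using hdH x 0 hx
  have hdy : H (d y) 1 := by simpa using hdH y 0 hy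
  have hx' := leibniz_sub_eq_of_mul_comm j H d hLeib hx hdy hxy
  have hy' := leibniz_sub_eq_of_mul_comm j H d hLeib hy hdx hyx
  refine ⟨hx', hy', fun ⟨hxc, hyc⟩ => ?_⟩
  refine eq_zero_of_eq_smul_of_eq_smul (hj.pow_ne_one_of_pos_of_lt two_ne_zero (by norm_num)) ?_ ?_
  · exact sub_eq_zero.mp (by rw [hx', hxc, sub_self])
  · exact sub_eq_zero.mp (by rw [hy', hyc, sub_self])

theorem stmt_13 (j : ℂ) (hj3 : j ^ 3 = 1) (hj1 : j ≠ 1)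
    (Ω : Type*) [Ring Ω] [Algebra ℂ Ω]
    (H : Ω → ℤ → Prop)
    (d : Ω →ₗ[ℂ] Ω)
    (hdH : ∀ ω i, H ω i → H (d ω) (i + 1))
    (hmulH : ∀ ω η i k, H ω i → H η k → H (ω * η) (i + k))
    (hLeib : ∀ (ω η : Ω) (i : ℤ), H ω i → d (ω * η) = d ω * η + j ^ i • (ω * d η))
    (x y : Ω) (hx : H x 0) (hy : H y 0)
    (hxy : x * d y = d y * x) (hyx : y * d x = d x * y) :
    (d x * d y - j • (d y * d x) = d (d y) * x - x * d (d y)) ∧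
    (d y * d x - j • (d x * d y) = d (d x) * y - y * d (d x)) ∧
    ((x * d (d y) = d (d y) * x ∧ y * d (d x) = d (d x) * y) →
      d x * d y = 0 ∧ d y * d x = 0) :=
  stmt_13_general j hj3 hj1 Ω H d hdH hLeib x y hx hy hxy hyx
end
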